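/- For any graph G, γ_I(G) = n(G) if and only if the maximum degree of G is at most 1. -/

import Mathlib

open Finset

open scoped Classical

/-- An Italian dominating function on a finite simple graph: values in {0,1,2} and
every vertex with value 0 has neighbour values summing to at least 2. -/
noncomputable def IsIDF {α : Type*} [Fintype α] (G : SimpleGraph α) (f : α → ℕ) : Prop :=
  (∀ u, f u ≤ 2) ∧
    ∀ u, f u = 0 → 2 ≤ ∑ w ∈ Finset.univ.filter (fun w => G.Adj u w), f w

/-- The Italian domination number γ_I(G). -/
noncomputable def italianNumber {α : Type*} [Fintype α] (G : SimpleGraph α) : ℕ :=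
  sInf {n | ∃ f : α → ℕ, IsIDF G f ∧ ∑ u, f u = n}

/-- A γ_I(G)-function: an IDF on G of minimum weight. -/
noncomputable def IsMinIDF {α : Type*} [Fintype α] (G : SimpleGraph α) (f : α → ℕ) : Prop :=
  IsIDF G f ∧ ∑ u, f u = italianNumber G

/-- D is a dominating set of G. -/
def IsDomSet {α : Type*} (G : SimpleGraph α) (D : Set α) : Prop :=
  ∀ u ∉ D, ∃ w ∈ D, G.Adj u w

/-- The domination number γ(G). -/
noncomputable def dominationNumber {α : Type*} [Fintype α] (G : SimpleGraph α) : ℕ :=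
  sInf {n | ∃ D : Finset α, IsDomSet G ↑D ∧ D.card = n}

/-- The degree of a vertex. -/
noncomputable def deg {α : Type*} [Fintype α] (G : SimpleGraph α) (u : α) : ℕ :=
  (Finset.univ.filter (fun w => G.Adj u w)).card

/-- The rooted product G∘_v H: one copy of H for each vertex of G, the root v of the
x-th copy being identified with the vertex x of G. The pair (x, y) is the vertex y of
the x-th copy of H; in particular (x, v) is the vertex x of G. -/
def rootedProd {α β : Type*} (G : SimpleGraph α) (H : SimpleGraph β) (v : β) :
    SimpleGraph (α × β) where
  Adj p q := (p.1 = q.1 ∧ H.Adj p.2 q.2) ∨ (p.2 = v ∧ q.2 = v ∧ G.Adj p.1 q.1)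
  symm := by
    refine ⟨?_⟩
    rintro ⟨x, y⟩ ⟨x', y'⟩ (⟨h1, h2⟩ | ⟨h1, h2, h3⟩)
    · exact Or.inl ⟨h1.symm, h2.symm⟩
    · exact Or.inr ⟨h2, h1, h3.symm⟩
  loopless := by
    refine ⟨?_⟩
    rintro ⟨x, y⟩ (⟨_, h⟩ | ⟨_, _, h⟩)
    · exact H.loopless.irrefl _ h
    · exact G.loopless.irrefl _ h

/-- The weight ω(f_x) of the restriction of f to the copy H_x. -/
def copyWeight {α β : Type*} [Fintype β] (f : α × β → ℕ) (x : α) : ℕ :=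
  ∑ y, f (x, y)

/-- The graph H − {v} obtained from H by deleting the vertex v. -/
def deleteVertex {β : Type*} (H : SimpleGraph β) (v : β) : SimpleGraph {w : β // w ≠ v} :=
  SimpleGraph.induce {w : β | w ≠ v} H

/-! If some vertex `u` has two neighbours, the function that is `0` at `u` and `1` elsewhere
is an Italian dominating function of weight `n - 1`. Conversely, when every degree is at most
one, a vertex of value `0` has a unique neighbour, whose value must be `2` and whose only
neighbour it is; so there are at least as many `2`s as `0`s, and any Italian dominating
function, having values in `{0, 1, 2}`, has weight at least `n`. -/

theorem Finset.sum_add_card_filter_eq_zero {α : Type*} [Fintype α] {f : α → ℕ}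
    (hf : ∀ u, f u ≤ 2) :
    ∑ u, f u + #(univ.filter (f · = 0)) = Fintype.card α + #(univ.filter (f · = 2)) := by
  rw [card_filter, card_filter, ← card_univ, card_eq_sum_ones, ← sum_add_distrib,
    ← sum_add_distrib]
  refine sum_congr rfl fun u _ => ?_
  have := hf u
  interval_cases f u <;> simp

namespace IsIDF

variable {α : Type*} [Fintype α] {G : SimpleGraph α} {f : α → ℕ}

theorem one (G : SimpleGraph α) : IsIDF G 1 :=
  ⟨fun _ => by simp, fun u hu => by simp at hu⟩

theorem update_zero_of_two_le_deg {u : α} (hu : 2 ≤ deg G u) :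
    IsIDF G (Function.update 1 u 0) := by
  refine ⟨fun x => ?_, fun x hx => ?_⟩
  · rcases eq_or_ne x u with rfl | hxu <;> simp [*]
  · obtain rfl : x = u := by
      by_contra hxu
      simp [hxu] at hx
    calc 2 ≤ deg G x := hu
      _ = ∑ w ∈ univ.filter (G.Adj x), Function.update (1 : α → ℕ) x 0 w := by
        rw [deg, card_eq_sum_ones]
        refine sum_congr rfl fun w hw => ?_
        rw [Function.update_of_ne (mem_filter.1 hw).2.ne', Pi.one_apply]

theorem exists_adj_eq_two (hf : IsIDF G f) {u : α} (hu : deg G u ≤ 1) (hfu : f u = 0) :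
    ∃ w, G.Adj u w ∧ f w = 2 := by
  have hsum := hf.2 u hfu
  obtain ⟨w, hw, -⟩ := exists_ne_zero_of_sum_ne_zero (two_pos.trans_le hsum).ne'
  have hN : univ.filter (G.Adj u) = {w} :=
    eq_singleton_iff_unique_mem.2 ⟨hw, fun x hx => card_le_one.1 hu x hx w hw⟩
  rw [hN, sum_singleton] at hsum
  exact ⟨w, (mem_filter.1 hw).2, le_antisymm (hf.1 w) hsum⟩

theorem card_le_sum_of_deg_le_one (hf : IsIDF G f) (hG : ∀ u, deg G u ≤ 1) :
    Fintype.card α ≤ ∑ u, f u := by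
  have hcard : #(univ.filter (f · = 0)) ≤ #(univ.filter (f · = 2)) := by
    refine card_le_card_of_forall_subsingleton G.Adj (fun u hu => ?_) fun w _ => ?_
    · obtain ⟨w, hadj, hw⟩ := hf.exists_adj_eq_two (hG u) (mem_filter.1 hu).2
      exact ⟨w, mem_filter.2 ⟨mem_univ w, hw⟩, hadj⟩
    · intro a ha b hb
      exact card_le_one.1 (hG w) a (by simpa using ha.2.symm) b (by simpa using hb.2.symm)
  have := sum_add_card_filter_eq_zero hf.1
  omega

end IsIDF

section

variable {α : Type*} [Fintype α] (G : SimpleGraph α)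

theorem italianNumber_le_sum {f : α → ℕ} (hf : IsIDF G f) : italianNumber G ≤ ∑ u, f u :=
  Nat.sInf_le ⟨f, hf, rfl⟩

theorem italianNumber_le_card : italianNumber G ≤ Fintype.card α := by
  simpa using italianNumber_le_sum G (IsIDF.one G)

theorem exists_isMinIDF : ∃ f, IsMinIDF G f :=
  Nat.sInf_mem (s := {n | ∃ f : α → ℕ, IsIDF G f ∧ ∑ u, f u = n}) ⟨_, 1, IsIDF.one G, rfl⟩

theorem italianNumber_lt_card_of_two_le_deg {u : α} (hu : 2 ≤ deg G u) :
    italianNumber G < Fintype.card α := by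
  have hweight := italianNumber_le_sum G (IsIDF.update_zero_of_two_le_deg hu)
  rw [sum_update_of_mem (mem_univ u)] at hweight
  simp only [Pi.one_apply, sum_const, smul_eq_mul, mul_one, zero_add] at hweight
  rw [card_sdiff_of_subset (subset_univ _), card_singleton, card_univ] at hweight
  have : 0 < Fintype.card α := Fintype.card_pos_iff.2 ⟨u⟩
  omega

end

/-- Remark: γ_I(G) = n(G) iff the maximum degree of G is at most 1. -/
theorem stmt12 {α : Type*} [Fintype α] (G : SimpleGraph α) :
    italianNumber G = Fintype.card α ↔ ∀ u : α, deg G u ≤ 1 := by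
  constructor
  · intro h u
    by_contra! hu
    exact (italianNumber_lt_card_of_two_le_deg G hu).ne h
  · intro hG
    obtain ⟨f, hf, hweight⟩ := exists_isMinIDF G
    exact le_antisymm (italianNumber_le_card G) (hweight ▸ hf.card_le_sum_of_deg_le_one hG)
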